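/- arXiv:2403.08690 — 2 statements merged into one kernel-verified Lean document; each statement's English description precedes it below -/
import Mathlib

section
/- Let $t_0 < T$, $d \in \mathbb{N}$, and let $w : [t_0,T] \to \mathbb{R}^{d\times d}$ be continuous. Let $b : [t_0,T] \times \mathbb{R}^d \to \mathbb{R}^d$ with $b(t,\cdot) \in L^2(\mathbb{R}^d;\mathbb{R}^d)$ for a.e. $t$ and $t \mapsto b(t,\cdot)$ continuous into $L^2$. Let $\Phi : [t_0,T] \times \mathbb{R}^d \to \mathbb{R}^d$ satisfy, for each $x \in \mathbb{R}^d$, $\partial_t \Phi(t,x) = w(t)\Phi(t,x) + b(t,x)$ with $\Phi(t_0,x) = 0$, and let $\Lambda : [t_0,T] \times \mathbb{R}^d \to \mathbb{R}^d$ satisfy $\partial_t \Lambda(t,x) = -w(t)^{\mathsf{tr}}\Lambda(t,x)$ with terminal condition $\Lambda(T,x) = \Lambda^T(x)$. Assume $\Phi(t,\cdot), \Lambda(t,\cdot) \in L^2(\mathbb{R}^d;\mathbb{R}^d)$ for all $t \in [t_0,T]$. Then $\langle \Phi(T,\cdot), \Lambda^T(\cdot) \rangle_{L^2} = \int_{t_0}^{T}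 \langle b(t,\cdot), \Lambda(t,\cdot) \rangle_{L^2} \, dt$. -/
/-!
For every `x`, `∂ₜ (Φ ⬝ᵥ Λ) = (wΦ + b) ⬝ᵥ Λ - Φ ⬝ᵥ wᵀΛ = b ⬝ᵥ Λ`, so the fundamental theorem of
calculus in `t` gives `Φ(T,x) ⬝ᵥ Λ(T,x) = ∫ b ⬝ᵥ Λ dt`; integrating in `x` and swapping the two
integrals (Fubini) gives the identity.

Fubini needs `(t, x) ↦ b ⬝ᵥ Λ` to be integrable on `[t₀,T] × ℝᵈ`. It is jointly measurable as the
`t`-derivative of `Φ ⬝ᵥ Λ`, which is continuous in `t` and measurable in `x`. By Hölder its `L¹`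
norm in `x` is at most `d ‖b(t,·)‖_{L²} ‖Λ(t,·)‖_{L²}`, which is bounded in `t`: the first factor
is continuous on the compact `[t₀,T]`, and backward Grönwall gives
`|Λ(t,x)| ≤ e^{K(T-t)} |Λ(T,x)|` with `K` a bound for `‖w‖` on `[t₀,T]`.
-/

open Matrix MeasureTheory Set Filter Function Real
open scoped ENNReal Topology

theorem HasDerivWithinAt.dotProduct {𝕜 n : Type*} [NontriviallyNormedField 𝕜] [Fintype n]
    {u v : 𝕜 → n → 𝕜} {u' v' : n → 𝕜} {s : Set 𝕜} {x : 𝕜}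
    (hu : HasDerivWithinAt u u' s x) (hv : HasDerivWithinAt v v' s x) :
    HasDerivWithinAt (fun t => u t ⬝ᵥ v t) (u' ⬝ᵥ v x + u x ⬝ᵥ v') s x := by
  have := HasDerivWithinAt.fun_sum (u := Finset.univ)
    fun i _ => (hasDerivWithinAt_pi.1 hu i).mul (hasDerivWithinAt_pi.1 hv i)
  rwa [Finset.sum_add_distrib] at this

theorem IsCompact.exists_forall_norm_mulVec_le {τ n : Type*} [TopologicalSpace τ] [Fintype n]
    {A : τ → Matrix n n ℝ} {K : Set τ} (hK : IsCompact K) (hA : ContinuousOn A K) :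
    ∃ C, 0 ≤ C ∧ ∀ t ∈ K, ∀ v, ‖A t *ᵥ v‖ ≤ C * ‖v‖ := by
  let _ := Matrix.linftyOpNormedAddCommGroup (m := n) (n := n) (α := ℝ)
  obtain ⟨C, hC⟩ := hK.exists_bound_of_continuousOn hA
  exact ⟨max C 0, le_max_right _ _, fun t ht v => (linfty_opNorm_mulVec _ _).trans
    (mul_le_mul_of_nonneg_right ((hC t ht).trans (le_max_left _ _)) (norm_nonneg v))⟩

theorem norm_le_exp_mul_norm_right_of_norm_deriv_le {E : Type*} [NormedAddCommGroup E]
    [NormedSpace ℝ E] {u u' : ℝ → E} {K a b : ℝ}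
    (hu : ∀ t ∈ Icc a b, HasDerivWithinAt u (u' t) (Icc a b) t)
    (hbound : ∀ t ∈ Icc a b, ‖u' t‖ ≤ K * ‖u t‖) :
    ∀ t ∈ Icc a b, ‖u t‖ ≤ exp (K * (b - t)) * ‖u b‖ := by
  have hneg : MapsTo (fun s : ℝ => -s) (Icc (-b) (-a)) (Icc a b) := fun s hs =>
    ⟨le_neg.1 hs.2, neg_le.1 hs.1⟩
  have hv : ∀ s ∈ Icc (-b) (-a),
      HasDerivWithinAt (fun s => u (-s)) (-u' (-s)) (Icc (-b) (-a)) s := fun s hs => by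
    simpa [Function.comp_def] using (hu _ (hneg hs)).scomp s (hasDerivWithinAt_neg s _) hneg
  intro t ht
  have := norm_le_gronwallBound_of_norm_deriv_right_le (δ := ‖u b‖) (ε := 0)
    (fun s hs => (hv s hs).continuousWithinAt)
    (fun s hs => (hv s (Ico_subset_Icc_self hs)).mono_of_mem_nhdsWithin
      (Icc_mem_nhdsGE_of_mem hs))
    (by simp) (fun s hs => by simpa using hbound _ (hneg (Ico_subset_Icc_self hs))) (-t)
    ⟨neg_le_neg ht.2, neg_le_neg ht.1⟩
  rwa [gronwallBound_ε0, sub_neg_eq_add, neg_add_eq_sub, neg_neg, mul_comm] at this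

theorem exists_forall_eLpNorm_le_of_hasDerivWithinAt_mulVec {X n : Type*} [MeasurableSpace X]
    {ν : Measure X} [Fintype n] {A : ℝ → Matrix n n ℝ} {a b : ℝ} (hA : ContinuousOn A (Icc a b))
    {u : ℝ → X → n → ℝ}
    (hu : ∀ x, ∀ t ∈ Icc a b, HasDerivWithinAt (u · x) (A t *ᵥ u t x) (Icc a b) t)
    {p : ℝ≥0∞} (hub : eLpNorm (u b) p ν ≠ ∞) :
    ∃ C : ℝ≥0∞, C ≠ ∞ ∧ ∀ t ∈ Icc a b, eLpNorm (u t) p ν ≤ C := by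
  obtain ⟨K, hK0, hK⟩ := isCompact_Icc.exists_forall_norm_mulVec_le hA
  refine ⟨ENNReal.ofReal (exp (K * (b - a))) * eLpNorm (u b) p ν,
    ENNReal.mul_ne_top ENNReal.ofReal_ne_top hub,
    fun t ht => eLpNorm_le_mul_eLpNorm_of_ae_le_mul (ae_of_all _ fun x => ?_) p⟩
  refine (norm_le_exp_mul_norm_right_of_norm_deriv_le (hu x) (fun s hs => hK s hs _) t ht).trans ?_
  gcongr
  exact ht.1

theorem exists_forall_eLpNorm_le_of_tendsto_integral_norm_sub_sq {τ X E : Type*}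
    [TopologicalSpace τ] [MeasurableSpace X] {ν : Measure X} [NormedAddCommGroup E]
    {f : τ → X → E} {K : Set τ} (hK : IsCompact K) (hf : ∀ t ∈ K, MemLp (f t) 2 ν)
    (hcont : ∀ s ∈ K, Tendsto (fun t => ∫ x, ‖f t x - f s x‖ ^ 2 ∂ν) (𝓝[K] s) (𝓝 0)) :
    ∃ C : ℝ≥0∞, C ≠ ∞ ∧ ∀ t ∈ K, eLpNorm (f t) 2 ν ≤ C := by
  have hdist : ∀ s ∈ K, ∀ t ∈ K,
      |lpNorm (f t) 2 ν - lpNorm (f s) 2 ν| ≤ √(∫ x, ‖f t x - f s x‖ ^ 2 ∂ν) := by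
    intro s hs t ht
    have hsq : lpNorm (f t - f s) 2 ν = √(∫ x, ‖f t x - f s x‖ ^ 2 ∂ν) := by
      rw [lpNorm_eq_integral_norm_rpow_toReal two_ne_zero ENNReal.ofNat_ne_top
        ((hf t ht).sub (hf s hs)).1, sqrt_eq_rpow]
      simp
    rw [abs_sub_le_iff, ← hsq]
    constructor
    · linarith [lpNorm_le_lpNorm_add_lpNorm_sub' (f := f t) (hf s hs) one_le_two]
    · linarith [lpNorm_le_lpNorm_add_lpNorm_sub (f := f s) (hf t ht) one_le_two]
  have hN : ContinuousOn (fun t => lpNorm (f t) 2 ν) K := by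
    intro s hs
    rw [ContinuousWithinAt, tendsto_iff_norm_sub_tendsto_zero]
    refine squeeze_zero_norm' ?_ (by simpa using (hcont s hs).sqrt)
    filter_upwards [self_mem_nhdsWithin] with t ht
    simpa using hdist s hs t ht
  obtain ⟨C, hC⟩ := hK.exists_bound_of_continuousOn hN
  refine ⟨ENNReal.ofReal C, ENNReal.ofReal_ne_top, fun t ht => ?_⟩
  rw [← ofReal_lpNorm (hf t ht)]
  exact ENNReal.ofReal_le_ofReal ((le_abs_self _).trans (hC t ht))

section Measurability

variable {α X E : Type*} [PseudoEMetricSpace α] [SecondCountableTopology α] [MeasurableSpace α]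
  [OpensMeasurableSpace α] [MeasurableSpace X] {ν : Measure X} [NormedAddCommGroup E]

theorem aestronglyMeasurable_uncurry_of_continuousOn {μ : Measure α} {f : α → X → E}
    {s : Set α} (hs : MeasurableSet s) (hc : ∀ x, ContinuousOn (f · x) s)
    (hm : ∀ t ∈ s, AEStronglyMeasurable (f t) ν) :
    AEStronglyMeasurable (uncurry f) ((μ.restrict s).prod ν) := by
  rcases s.eq_empty_or_nonempty with rfl | ⟨t₀, ht₀⟩
  · simp
  -- Replace `t` by simple functions `g n t ∈ s` converging to it: `f (g n t) x` takes only
  -- finitely many functions of `x`, so only countably many `f t` have to be measurable.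
  set g := SimpleFunc.approxOn id measurable_id s t₀ ht₀
  have hg_piecewise : ∀ n, (fun p : α × X => f (g n p.1) p.2) =
      ∑ c ∈ (g n).range, ((g n ⁻¹' {c}) ×ˢ univ).indicator (fun p => f c p.2) := by
    intro n
    ext p
    rw [Finset.sum_apply, Finset.sum_eq_single_of_mem _ ((g n).mem_range_self p.1)]
    · simp
    · intro c _ hc
      simp [Ne.symm hc]
  refine aestronglyMeasurable_of_tendsto_ae atTop (f := fun n p => f (g n p.1) p.2)
    (fun n => ?_) ?_
  · rw [hg_piecewise]
    refine Finset.aestronglyMeasurable_sum _ fun c hc => ?_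
    obtain ⟨t, rfl⟩ := (g n).mem_range.1 hc
    exact ((hm _ (SimpleFunc.approxOn_mem _ _ _ t)).comp_quasiMeasurePreserving
      Measure.quasiMeasurePreserving_snd).indicator
      (((g n).measurableSet_preimage _).prod MeasurableSet.univ)
  · filter_upwards [Measure.quasiMeasurePreserving_fst.ae (ae_restrict_mem hs)] with p hp
    exact (hc p.2 p.1 hp).tendsto.comp (tendsto_nhdsWithin_iff.2
      ⟨SimpleFunc.tendsto_approxOn _ _ (subset_closure hp),
        Eventually.of_forall fun n => SimpleFunc.approxOn_mem _ _ _ _⟩)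

theorem aestronglyMeasurable_uncurry_of_hasDerivWithinAt [NormedSpace ℝ E] {μ : Measure ℝ}
    [NullSingletonClass μ] {f f' : ℝ → X → E} {a b : ℝ}
    (hf : ∀ x, ∀ t ∈ Icc a b, HasDerivWithinAt (f · x) (f' t x) (Icc a b) t)
    (hm : ∀ t ∈ Icc a b, AEStronglyMeasurable (f t) ν) :
    AEStronglyMeasurable (uncurry f') ((μ.restrict (Icc a b)).prod ν) := by
  -- Right difference quotients, truncated at `b` to stay in `[a, b]`; they converge for `t < b`.
  set h : ℕ → ℝ := fun n => 1 / (n + 1)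
  have hpos : ∀ n, 0 < h n := fun n => Nat.one_div_pos_of_nat
  have hshift : ∀ n, MapsTo (fun t => min (t + h n) b) (Icc a b) (Icc a b) := fun n t ht =>
    ⟨le_min (by linarith [ht.1, hpos n]) (ht.1.trans ht.2), min_le_right _ _⟩
  have hcont : ∀ x, ContinuousOn (f · x) (Icc a b) := fun x t ht =>
    (hf x t ht).continuousWithinAt
  refine aestronglyMeasurable_of_tendsto_ae atTop
    (f := fun n p => (h n)⁻¹ • (f (min (p.1 + h n) b) p.2 - f p.1 p.2)) (fun n => ?_) ?_
  · refine ((aestronglyMeasurable_uncurry_of_continuousOn measurableSet_Icc (fun x => ?_)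
      fun t ht => hm _ (hshift n ht)).sub
      (aestronglyMeasurable_uncurry_of_continuousOn measurableSet_Icc hcont hm)).const_smul _
    exact (hcont x).comp (by fun_prop) (hshift n)
  · have hIco : ∀ᵐ t ∂μ.restrict (Icc a b), t ∈ Ico a b := by
      filter_upwards [ae_restrict_mem measurableSet_Icc, ae_restrict_of_ae (μ.ae_ne b)]
        with t ht htb using ⟨ht.1, ht.2.lt_of_ne htb⟩
    filter_upwards [Measure.quasiMeasurePreserving_fst.ae hIco] with p hp
    have hslope : Tendsto (slope (f · p.2) p.1) (𝓝[>] p.1) (𝓝 (f' p.1 p.2)) :=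
      (hasDerivWithinAt_iff_tendsto_slope' (lt_irrefl _)).1
        ((hf p.2 p.1 (Ico_subset_Icc_self hp)).mono_of_mem_nhdsWithin
          (Icc_mem_nhdsGE_of_mem hp)).Ioi_of_Ici
    have hu : Tendsto (fun n => p.1 + h n) atTop (𝓝[>] p.1) :=
      tendsto_nhdsWithin_iff.2
        ⟨by simpa [h] using tendsto_one_div_add_atTop_nhds_zero_nat.const_add p.1,
          Eventually.of_forall fun n => lt_add_of_pos_right _ (hpos n)⟩
    refine (hslope.comp hu).congr' ?_
    filter_upwards [(tendsto_nhdsWithin_iff.1 hu).1.eventually (eventually_le_nhds hp.2)]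
      with n hn
    simp [slope_def_module, min_eq_left hn]

end Measurability

theorem nnnorm_dotProduct_le {n R : Type*} [Fintype n] [SeminormedCommRing R] (u v : n → R) :
    ‖u ⬝ᵥ v‖₊ ≤ Fintype.card n * ‖u‖₊ * ‖v‖₊ := by
  calc ‖u ⬝ᵥ v‖₊ ≤ ∑ i, ‖u i‖₊ * ‖v i‖₊ :=
        (nnnorm_sum_le _ _).trans (Finset.sum_le_sum fun i _ => nnnorm_mul_le _ _)
    _ ≤ ∑ _i : n, ‖u‖₊ * ‖v‖₊ := Finset.sum_le_sum fun i _ =>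
        mul_le_mul' (nnnorm_le_pi_nnnorm u i) (nnnorm_le_pi_nnnorm v i)
    _ = Fintype.card n * ‖u‖₊ * ‖v‖₊ := by simp [mul_assoc]

theorem integrable_prod_of_ae_lintegral_enorm_le {α β E : Type*} [MeasurableSpace α]
    [MeasurableSpace β] [NormedAddCommGroup E] {μ : Measure α} [IsFiniteMeasure μ] {ν : Measure β}
    [SFinite ν] {F : α × β → E} (hF : AEStronglyMeasurable F (μ.prod ν)) {C : ℝ≥0∞} (hC : C ≠ ∞)
    (hbound : ∀ᵐ a ∂μ, ∫⁻ b, ‖F (a, b)‖ₑ ∂ν ≤ C) : Integrable F (μ.prod ν) := by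
  refine ⟨hF, ?_⟩
  calc ∫⁻ p, ‖F p‖ₑ ∂μ.prod ν = ∫⁻ a, ∫⁻ b, ‖F (a, b)‖ₑ ∂ν ∂μ := lintegral_prod _ hF.enorm
    _ ≤ ∫⁻ _, C ∂μ := lintegral_mono_ae hbound
    _ < ∞ := by simpa using ENNReal.mul_lt_top hC.lt_top (measure_lt_top μ univ)

theorem integrable_uncurry_dotProduct {α X n R : Type*} [MeasurableSpace α] [MeasurableSpace X]
    [Fintype n] [NormedCommRing R] {μ : Measure α} [IsFiniteMeasure μ] {ν : Measure X} [SFinite ν]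
    {u v : α → X → n → R} (hm : AEStronglyMeasurable (uncurry fun t x => u t x ⬝ᵥ v t x) (μ.prod ν))
    {Cu Cv : ℝ≥0∞} (hCu : Cu ≠ ∞) (hCv : Cv ≠ ∞)
    (hu : ∀ᵐ t ∂μ, AEStronglyMeasurable (u t) ν ∧ eLpNorm (u t) 2 ν ≤ Cu)
    (hv : ∀ᵐ t ∂μ, AEStronglyMeasurable (v t) ν ∧ eLpNorm (v t) 2 ν ≤ Cv) :
    Integrable (uncurry fun t x => u t x ⬝ᵥ v t x) (μ.prod ν) := by
  refine integrable_prod_of_ae_lintegral_enorm_le hm (C := Fintype.card n * Cu * Cv)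
    (ENNReal.mul_ne_top (ENNReal.mul_ne_top (ENNReal.natCast_ne_top _) hCu) hCv) ?_
  filter_upwards [hu, hv] with t ⟨hum, hu_le⟩ ⟨hvm, hv_le⟩
  rw [← eLpNorm_one_eq_lintegral_enorm]
  calc eLpNorm (fun x => u t x ⬝ᵥ v t x) 1 ν
      ≤ Fintype.card n * eLpNorm (u t) 2 ν * eLpNorm (v t) 2 ν :=
        eLpNorm_le_eLpNorm_mul_eLpNorm_of_nnnorm hum hvm _ _
          (ae_of_all _ fun x => nnnorm_dotProduct_le _ _)
    _ ≤ Fintype.card n * Cu * Cv := by gcongr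

/-- **Flow duality identity** (Proposition 2). For the `x`-parameterized characteristic
flow `∂ₜΦ(t,x) = w(t)Φ(t,x) + b(t,x)`, `Φ(t₀,x) = 0`, and the adjoint flow
`∂ₜΛ(t,x) = -w(t)ᵀΛ(t,x)`, `Λ(T,x) = Λᵀ(x)`, with `b(t,·)` in `L²` and continuous in
time into `L²`, and `Φ(t,·), Λ(t,·) ∈ L²`, one has
`⟨Φ(T,·), Λᵀ⟩_{L²} = ∫_{t₀}^{T} ⟨b(t,·), Λ(t,·)⟩_{L²} dt`. -/
theorem flow_duality {d : ℕ} (t₀ T : ℝ) (ht : t₀ < T)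
    (w : ℝ → Matrix (Fin d) (Fin d) ℝ) (hw : ContinuousOn w (Set.Icc t₀ T))
    (b Φ Λ : ℝ → (Fin d → ℝ) → Fin d → ℝ) (ΛT : (Fin d → ℝ) → Fin d → ℝ)
    (hbL2 : ∀ t ∈ Set.Icc t₀ T, MemLp (b t) 2 (volume : Measure (Fin d → ℝ)))
    (hbcont : ∀ s ∈ Set.Icc t₀ T,
      Filter.Tendsto (fun t => ∫ x, ‖b t x - b s x‖ ^ 2)
        (nhdsWithin s (Set.Icc t₀ T)) (nhds 0))
    (hΦ : ∀ x, ∀ t ∈ Set.Icc t₀ T,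
      HasDerivWithinAt (fun s => Φ s x) (w t *ᵥ Φ t x + b t x) (Set.Icc t₀ T) t)
    (hΦ0 : ∀ x, Φ t₀ x = 0)
    (hΛ : ∀ x, ∀ t ∈ Set.Icc t₀ T,
      HasDerivWithinAt (fun s => Λ s x) (-((w t)ᵀ *ᵥ Λ t x)) (Set.Icc t₀ T) t)
    (hΛT : ∀ x, Λ T x = ΛT x)
    (hΦL2 : ∀ t ∈ Set.Icc t₀ T, MemLp (Φ t) 2 (volume : Measure (Fin d → ℝ)))
    (hΛL2 : ∀ t ∈ Set.Icc t₀ T, MemLp (Λ t) 2 (volume : Measure (Fin d → ℝ))) :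
    ∫ x, Φ T x ⬝ᵥ ΛT x = ∫ t in t₀..T, ∫ x, b t x ⬝ᵥ Λ t x := by
  have hpair : ∀ x, ∀ t ∈ Icc t₀ T, HasDerivWithinAt (fun s => Φ s x ⬝ᵥ Λ s x)
      (b t x ⬝ᵥ Λ t x) (Icc t₀ T) t := fun x t ht =>
    ((hΦ x t ht).dotProduct (hΛ x t ht)).congr_deriv <| by
      rw [add_dotProduct, dotProduct_neg, dotProduct_mulVec, vecMul_transpose]
      ring
  obtain ⟨CΛ, hCΛ, hΛ_le⟩ :=
    exists_forall_eLpNorm_le_of_hasDerivWithinAt_mulVec (A := fun t => -(w t)ᵀ)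
      (continuous_id.matrix_transpose.comp_continuousOn hw).neg
      (fun x t ht => by simpa only [neg_mulVec] using hΛ x t ht)
      (hΛL2 T (right_mem_Icc.2 ht.le)).eLpNorm_ne_top
  obtain ⟨Cb, hCb, hb_le⟩ :=
    exists_forall_eLpNorm_le_of_tendsto_integral_norm_sub_sq isCompact_Icc hbL2 hbcont
  have hint : Integrable (uncurry fun t x => b t x ⬝ᵥ Λ t x)
      ((volume.restrict (Icc t₀ T)).prod volume) :=
    integrable_uncurry_dotProduct (aestronglyMeasurable_uncurry_of_hasDerivWithinAt hpair
      fun t ht => (continuous_fst.dotProduct continuous_snd).comp_aestronglyMeasurable₂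
        (hΦL2 t ht).1 (hΛL2 t ht).1) hCb hCΛ
      ((ae_restrict_mem measurableSet_Icc).mono fun t ht => ⟨(hbL2 t ht).1, hb_le t ht⟩)
      ((ae_restrict_mem measurableSet_Icc).mono fun t ht => ⟨(hΛL2 t ht).1, hΛ_le t ht⟩)
  calc ∫ x, Φ T x ⬝ᵥ ΛT x = ∫ x, ∫ t in t₀..T, b t x ⬝ᵥ Λ t x := by
        refine integral_congr_ae ?_
        filter_upwards [hint.prod_left_ae] with x hx
        rw [intervalIntegral.integral_eq_sub_of_hasDerivAt_of_le ht.le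
          (fun t ht => (hpair x t ht).continuousWithinAt)
          (fun t ht => (hpair x t (Ioo_subset_Icc_self ht)).hasDerivAt (Icc_mem_nhds ht.1 ht.2))
          ((intervalIntegrable_iff_integrableOn_Icc_of_le ht.le).2 hx),
          hΦ0, zero_dotProduct, sub_zero, hΛT]
    _ = ∫ t in t₀..T, ∫ x, b t x ⬝ᵥ Λ t x := by
        rw [intervalIntegral_integral_swap]
        rwa [uIoc_of_le ht.le, Measure.restrict_congr_set Ioc_ae_eq_Icc]
end

section
/- Let $t_0 < T$, $d \in \mathbb{N}$, and let $w : [t_0,T] \to \mathbb{R}^{d\times d}$ be continuous. Define the parameterized HUM map $\Gamma_\Phi : L^2(\mathbb{R}^d;\mathbb{R}^d) \to L^2(\mathbb{R}^d;\mathbb{R}^d)$ by $\Gamma_\Phi(\Lambda^T) = \Phi(T,\cdot)$, where for each $x \in \mathbb{R}^d$, $\Lambda(\cdot,x)$ solves $\partial_t \Lambda(t,x) = -w(t)^{\mathsf{tr}} \Lambda(t,x)$, $\Lambda(T,x) = \Lambda^T(x)$, and $\Phi(\cdot,x)$ solves $\partial_t \Phi(t,x) = w(t)\Phi(t,x) +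 \Lambda(t,x)$, $\Phi(t_0,x) = 0$. Define the reachable set $\mathcal{R}_\Phi$ as the set of all $y \in L^2(\mathbb{R}^d;\mathbb{R}^d)$ such that there exists a control $b$ with $b(t,\cdot) \in L^2(\mathbb{R}^d;\mathbb{R}^d)$, $(t,x) \mapsto b(t,x)$ jointly measurable and $t \mapsto b(t,\cdot)$ continuous into $L^2$, for which the solution of $\partial_t \Phi(t,x) = w(t)\Phi(t,x) + b(t,x)$, $\Phi(t_0,x) = 0$, satisfies $\Phi(T,\cdot) = y$ in $L^2$. Then $\mathcal{R}_\Phi = \Gamma_\Phi(L^2(\mathbb{R}^d;\mathbb{R}^d))$. -/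
/-!
Both sets are all of `L²`. Any `y ∈ L²` is reached along `Φ(t, x) = θ(t) y(x)`, with `θ` rising
linearly from `0` to `1`, by the control `b = (θ' - θ w) y`.

For the HUM map, let `P` solve the adjoint equation `P' = -wᵀ P`, `P(t₀) = 1`, and `Z` solve
`Z' = w Z + P`, `Z(t₀) = 0` (these linear equations are solved on all of `[t₀, T]` by chaining
Picard–Lindelöf steps of uniform length). Then `Λ = P η`, `Φ = Z η` give `Φ(T) = Z(T) η`, so it
suffices that `Z(T)` is invertible. If `Z(T) v = 0`, the duality identity
`d/dt ⟨P v, Z v⟩ = |P v|²` integrates to `∫ |P(t) v|² dt = 0`, whence `v = P(t₀) v = 0`.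
-/

open Set Filter Topology MeasureTheory Matrix

section ODE

variable {E : Type*} [NormedAddCommGroup E] [NormedSpace ℝ E] {v : ℝ → E → E} {a b : ℝ}

lemma hasDerivWithinAt_Icc_ite {f g : ℝ → E} {m c : ℝ}
    (hf : ∀ t ∈ Icc a m, HasDerivWithinAt f (v t (f t)) (Icc a m) t)
    (hg : ∀ t ∈ Icc m c, HasDerivWithinAt g (v t (g t)) (Icc m c) t) (hfg : f m = g m) :
    ∀ t ∈ Icc a c, HasDerivWithinAt (fun τ => if τ ≤ m then f τ else g τ)
      (v t (if t ≤ m then f t else g t)) (Icc a c) t := by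
  intro t ht
  set h := fun τ => if τ ≤ m then f τ else g τ
  have hhf : EqOn h f (Icc a m) := fun τ hτ => if_pos hτ.2
  have hhg : EqOn h g (Icc m c) := fun τ hτ => by
    rcases hτ.1.eq_or_lt with rfl | hlt
    · simp [h, hfg]
    · exact if_neg hlt.not_ge
  have H₁ : HasDerivWithinAt h (v t (h t)) (Icc a m) t := by
    by_cases htm : t ≤ m
    · rw [hhf ⟨ht.1, htm⟩]
      exact (hf t ⟨ht.1, htm⟩).congr hhf (hhf ⟨ht.1, htm⟩)
    · refine HasFDerivWithinAt.of_notMem_closure ?_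
      rw [closure_Icc]
      exact fun h' => htm h'.2
  have H₂ : HasDerivWithinAt h (v t (h t)) (Icc m c) t := by
    by_cases hmt : m ≤ t
    · rw [hhg ⟨hmt, ht.2⟩]
      exact (hg t ⟨hmt, ht.2⟩).congr hhg (hhg ⟨hmt, ht.2⟩)
    · refine HasFDerivWithinAt.of_notMem_closure ?_
      rw [closure_Icc]
      exact fun h' => hmt h'.1
  exact (H₁.union H₂).mono Icc_subset_Icc_union_Icc

variable [CompleteSpace E] {K : NNReal}

lemma exists_pos_forall_exists_hasDerivWithinAt_Icc_min
    (hlip : ∀ t ∈ Icc a b, LipschitzWith K (v t))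
    (hcont : ∀ x, ContinuousOn (fun t => v t x) (Icc a b)) {B : ℝ} (hB : 0 ≤ B)
    (hvB : ∀ t ∈ Icc a b, ‖v t 0‖ ≤ B) :
    ∃ ε > 0, ∀ s ∈ Icc a b, ∀ X : E, ∃ g : ℝ → E, g s = X ∧
      ∀ t ∈ Icc s (min (s + ε) b), HasDerivWithinAt g (v t (g t)) (Icc s (min (s + ε) b)) t := by
  have hK : (0 : ℝ) ≤ K := K.coe_nonneg
  have hpos : 0 < B + 2 * K + 1 := by linarith
  refine ⟨(B + 2 * K + 1)⁻¹, inv_pos.mpr hpos, fun s hs X => ?_⟩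
  set m := min (s + (B + 2 * K + 1)⁻¹) b
  have hsm : s ≤ m := le_min (by linarith [inv_pos.mpr hpos]) hs.2
  have hsub : Icc s m ⊆ Icc a b := Icc_subset_Icc hs.1 (min_le_right _ _)
  -- On the ball of radius `‖X‖ + 1` about `X` the field is bounded by `B + K (2‖X‖ + 1)`,
  -- and a time step `(B + 2K + 1)⁻¹` is short enough to stay in that ball.
  have hPL : IsPicardLindelof v (tmin := s) (tmax := m) ⟨s, le_rfl, hsm⟩ X
      ⟨‖X‖ + 1, by positivity⟩ 0 ⟨B + K * (2 * ‖X‖ + 1), by positivity⟩ K :=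
    { lipschitzOnWith := fun t ht => (hlip t (hsub ht)).lipschitzOnWith
      continuousOn := fun x _ => (hcont x).mono hsub
      norm_le := fun t ht x hx => by
        have hx' : ‖x‖ ≤ 2 * ‖X‖ + 1 := by
          have h₁ : ‖x - X‖ ≤ ‖X‖ + 1 := mem_closedBall_iff_norm.mp hx
          linarith [norm_le_norm_add_norm_sub' x X]
        have hlipx := (hlip t (hsub ht)).norm_sub_le x 0
        rw [sub_zero] at hlipx
        calc ‖v t x‖ ≤ ‖v t 0‖ + ‖v t x - v t 0‖ := norm_le_norm_add_norm_sub' _ _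
          _ ≤ B + K * (2 * ‖X‖ + 1) := by
            gcongr
            · exact hvB t (hsub ht)
            · exact hlipx.trans (by gcongr)
      mul_max_le := by
        have hmax : max (m - s) (s - s) ≤ (B + 2 * K + 1)⁻¹ := by
          refine max_le ?_ (by simp [hpos.le])
          linarith [min_le_left (s + (B + 2 * K + 1)⁻¹) b]
        simp only [NNReal.coe_zero, sub_zero]
        calc (B + K * (2 * ‖X‖ + 1)) * max (m - s) (s - s)
            ≤ (B + K * (2 * ‖X‖ + 1)) * (B + 2 * K + 1)⁻¹ := by gcongr
          _ ≤ ‖X‖ + 1 := by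
            rw [← div_eq_mul_inv, div_le_iff₀ hpos]
            nlinarith [norm_nonneg X] }
  exact hPL.exists_eq_forall_mem_Icc_hasDerivWithinAt₀

theorem exists_forall_hasDerivWithinAt_Icc_of_lipschitzWith (hab : a ≤ b)
    (hlip : ∀ t ∈ Icc a b, LipschitzWith K (v t))
    (hcont : ∀ x, ContinuousOn (fun t => v t x) (Icc a b)) (X : E) :
    ∃ f : ℝ → E, f a = X ∧ ∀ t ∈ Icc a b, HasDerivWithinAt f (v t (f t)) (Icc a b) t := by
  obtain ⟨B, hB⟩ := isCompact_Icc.exists_bound_of_continuousOn (hcont 0)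
  obtain ⟨ε, hε, hstep⟩ := exists_pos_forall_exists_hasDerivWithinAt_Icc_min hlip hcont
    ((norm_nonneg _).trans (hB a ⟨le_rfl, hab⟩)) hB
  have key : ∀ n : ℕ, ∃ f : ℝ → E, f a = X ∧ ∀ t ∈ Icc a (min (a + n * ε) b),
      HasDerivWithinAt f (v t (f t)) (Icc a (min (a + n * ε) b)) t := by
    intro n
    induction n with
    | zero =>
      refine ⟨fun _ => X, rfl, fun t _ => HasFDerivWithinAt.of_subsingleton ?_⟩
      simp [min_eq_left hab]
    | succ n ih =>
      obtain ⟨f, hfa, hf⟩ := ih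
      set m := min (a + n * ε) b
      have ham : a ≤ m := le_min (by nlinarith [n.cast_nonneg (α := ℝ)]) hab
      obtain ⟨g, hgm, hg⟩ := hstep m ⟨ham, min_le_right _ _⟩ (f m)
      have hmm : min (m + ε) b = min (a + (n + 1 : ℕ) * ε) b := by
        rw [← min_add_add_right, min_assoc, min_eq_right (by linarith : b ≤ b + ε)]
        push_cast
        ring_nf
      refine ⟨fun τ => if τ ≤ m then f τ else g τ, by simp [ham, hfa], ?_⟩
      rw [← hmm]
      exact hasDerivWithinAt_Icc_ite hf hg hgm.symm
  obtain ⟨n, hn⟩ := exists_nat_ge ((b - a) / ε)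
  obtain ⟨f, hfa, hf⟩ := key n
  rw [min_eq_right (by rw [div_le_iff₀ hε] at hn; linarith)] at hf
  exact ⟨f, hfa, hf⟩

end ODE

theorem exists_forall_hasDerivWithinAt_Icc_mul_add {𝔸 : Type*} [NormedRing 𝔸]
    [NormedAlgebra ℝ 𝔸] [CompleteSpace 𝔸] {a b : ℝ} (hab : a ≤ b) {A c : ℝ → 𝔸}
    (hA : ContinuousOn A (Icc a b)) (hc : ContinuousOn c (Icc a b)) (X : 𝔸) :
    ∃ f : ℝ → 𝔸, f a = X ∧
      ∀ t ∈ Icc a b, HasDerivWithinAt f (A t * f t + c t) (Icc a b) t := by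
  obtain ⟨C, hC⟩ := isCompact_Icc.exists_bound_of_continuousOn hA
  refine exists_forall_hasDerivWithinAt_Icc_of_lipschitzWith (v := fun t x => A t * x + c t)
    (K := C.toNNReal) hab (fun t ht => LipschitzWith.of_dist_le_mul fun x y => ?_)
    (fun x => (hA.mul continuousOn_const).add hc) X
  rw [dist_eq_norm, dist_eq_norm, add_sub_add_right_eq_sub, ← mul_sub]
  exact (norm_mul_le _ _).trans (by gcongr; exact (hC t ht).trans (Real.le_coe_toNNReal C))

lemma hasDerivWithinAt_dotProduct_of_adjoint {n : Type*} [Fintype n] {A : Matrix n n ℝ}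
    {p q : ℝ → n → ℝ} {f : n → ℝ} {s : Set ℝ} {t : ℝ}
    (hp : HasDerivWithinAt p (-(Aᵀ *ᵥ p t)) s t) (hq : HasDerivWithinAt q (A *ᵥ q t + f) s t) :
    HasDerivWithinAt (fun τ => p τ ⬝ᵥ q τ) (p t ⬝ᵥ f) s t := by
  have h := HasDerivWithinAt.fun_sum fun i (_ : i ∈ Finset.univ) =>
    (hasDerivWithinAt_pi.mp hp i).mul (hasDerivWithinAt_pi.mp hq i)
  refine h.congr_deriv ?_
  have hsum : ∑ i, ((-(Aᵀ *ᵥ p t)) i * q t i + p t i * (A *ᵥ q t + f) i)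
      = -(Aᵀ *ᵥ p t) ⬝ᵥ q t + p t ⬝ᵥ (A *ᵥ q t + f) := by
    simp only [dotProduct, Finset.sum_add_distrib]
  rw [hsum, neg_dotProduct, dotProduct_add, mulVec_transpose, ← dotProduct_mulVec]
  ring

lemma MeasureTheory.MemLp.const_mulVec {α m n : Type*} [MeasurableSpace α] {μ : Measure α}
    [Fintype m] [Fintype n] {p : ENNReal} {g : α → n → ℝ} (hg : MemLp g p μ)
    (B : Matrix m n ℝ) : MemLp (fun x => B *ᵥ g x) p μ :=
  B.mulVecLin.toContinuousLinearMap.comp_memLp' hg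

section HUM

variable {α n : Type*} [MeasurableSpace α] [Fintype n] [DecidableEq n]

def reachableSet (μ : Measure α) (t₀ T : ℝ) (w : ℝ → Matrix n n ℝ) : Set (α → n → ℝ) :=
  {y | MemLp y 2 μ ∧ ∃ b : ℝ → α → n → ℝ, (∀ t ∈ Icc t₀ T, MemLp (b t) 2 μ) ∧
    Measurable (Function.uncurry b) ∧
    (∀ s ∈ Icc t₀ T, Tendsto (fun t => ∫ x, ‖b t x - b s x‖ ^ 2 ∂μ) (𝓝[Icc t₀ T] s) (𝓝 0)) ∧
    ∃ Φ : ℝ → α → n → ℝ,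
      (∀ x, ∀ t ∈ Icc t₀ T,
        HasDerivWithinAt (fun s => Φ s x) (w t *ᵥ Φ t x + b t x) (Icc t₀ T) t) ∧
      (∀ x, Φ t₀ x = 0) ∧ Φ T =ᵐ[μ] y}

def humImage (μ : Measure α) (t₀ T : ℝ) (w : ℝ → Matrix n n ℝ) : Set (α → n → ℝ) :=
  {y | MemLp y 2 μ ∧ ∃ ΛT : α → n → ℝ, MemLp ΛT 2 μ ∧ ∃ Λ Φ : ℝ → α → n → ℝ,
    (∀ x, ∀ t ∈ Icc t₀ T,
      HasDerivWithinAt (fun s => Λ s x) (-((w t)ᵀ *ᵥ Λ t x)) (Icc t₀ T) t) ∧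
    (∀ x, Λ T x = ΛT x) ∧
    (∀ x, ∀ t ∈ Icc t₀ T,
      HasDerivWithinAt (fun s => Φ s x) (w t *ᵥ Φ t x + Λ t x) (Icc t₀ T) t) ∧
    (∀ x, Φ t₀ x = 0) ∧ Φ T =ᵐ[μ] y}

end HUM

section MatrixNorm

attribute [local instance] Matrix.linftyOpNormedAddCommGroup Matrix.linftyOpNormedSpace
  Matrix.linftyOpNormedRing Matrix.linftyOpNormedAlgebra

variable {α m n : Type*} [MeasurableSpace α] {μ : Measure α} [Fintype m] [Fintype n]

lemma HasDerivWithinAt.mulVec_const {M : ℝ → Matrix m n ℝ} {M' : Matrix m n ℝ} {s : Set ℝ}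
    {t : ℝ} (hM : HasDerivWithinAt M M' s t) (u : n → ℝ) :
    HasDerivWithinAt (fun τ => M τ *ᵥ u) (M' *ᵥ u) s t := by
  classical
  let L : Matrix m n ℝ →L[ℝ] m → ℝ :=
    (LinearMap.applyₗ u ∘ₗ Matrix.toLin'.toLinearMap).toContinuousLinearMap
  exact L.hasFDerivAt.comp_hasDerivWithinAt t hM

lemma tendsto_integral_norm_mulVec_sub_sq {ι : Type*} {l : Filter ι} {B : ι → Matrix m n ℝ}
    {B₀ : Matrix m n ℝ} (hB : Tendsto B l (𝓝 B₀)) {g : α → n → ℝ} (hg : MemLp g 2 μ) :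
    Tendsto (fun i => ∫ x, ‖B i *ᵥ g x - B₀ *ᵥ g x‖ ^ 2 ∂μ) l (𝓝 0) := by
  have hgi : Integrable (fun x => ‖g x‖ ^ 2) μ := hg.integrable_norm_pow two_ne_zero
  have hbound : ∀ i,
      ∫ x, ‖B i *ᵥ g x - B₀ *ᵥ g x‖ ^ 2 ∂μ ≤ ‖B i - B₀‖ ^ 2 * ∫ x, ‖g x‖ ^ 2 ∂μ := by
    intro i
    rw [← integral_const_mul]
    refine integral_mono_of_nonneg (ae_of_all _ fun x => by positivity) (hgi.const_mul _)
      (ae_of_all _ fun x => ?_)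
    show ‖B i *ᵥ g x - B₀ *ᵥ g x‖ ^ 2 ≤ ‖B i - B₀‖ ^ 2 * ‖g x‖ ^ 2
    rw [← sub_mulVec, ← mul_pow]
    gcongr
    exact linfty_opNorm_mulVec _ _
  have hlim : Tendsto (fun i => ‖B i - B₀‖ ^ 2 * ∫ x, ‖g x‖ ^ 2 ∂μ) l (𝓝 0) := by
    simpa using ((tendsto_iff_norm_sub_tendsto_zero.mp hB).pow 2).mul_const (∫ x, ‖g x‖ ^ 2 ∂μ)
  exact tendsto_of_tendsto_of_tendsto_of_le_of_le tendsto_const_nhds hlim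
    (fun i => integral_nonneg fun x => by positivity) hbound

variable [DecidableEq n] {t₀ T : ℝ}

theorem isUnit_of_hasDerivWithinAt_adjoint_forced (ht : t₀ < T) {A P Z : ℝ → Matrix n n ℝ}
    (hP : ∀ t ∈ Icc t₀ T, HasDerivWithinAt P (-((A t)ᵀ * P t)) (Icc t₀ T) t) (hP₀ : P t₀ = 1)
    (hZ : ∀ t ∈ Icc t₀ T, HasDerivWithinAt Z (A t * Z t + P t) (Icc t₀ T) t) (hZ₀ : Z t₀ = 0) :
    IsUnit (Z T) := by
  rw [← mulVec_injective_iff_isUnit, ← (Z T).coe_mulVecLin, injective_iff_map_eq_zero]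
  intro v (hv : Z T *ᵥ v = 0)
  by_contra hne
  set p := fun τ => P τ *ᵥ v
  set q := fun τ => Z τ *ᵥ v
  have hpc : ContinuousOn p (Icc t₀ T) := fun τ hτ =>
    ((hP τ hτ).mulVec_const v).continuousWithinAt
  have hpp : ContinuousOn (fun τ => p τ ⬝ᵥ p τ) (Icc t₀ T) :=
    (continuous_id.dotProduct continuous_id).comp_continuousOn hpc
  have hpq : ∀ τ ∈ Icc t₀ T,
      HasDerivWithinAt (fun τ => p τ ⬝ᵥ q τ) (p τ ⬝ᵥ p τ) (Icc t₀ T) τ := fun τ hτ =>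
    hasDerivWithinAt_dotProduct_of_adjoint (A := A τ)
      (by simpa [p, neg_mulVec, mulVec_mulVec] using (hP τ hτ).mulVec_const v)
      (by simpa [p, q, add_mulVec, mulVec_mulVec] using (hZ τ hτ).mulVec_const v)
  have hFTC : ∫ τ in t₀..T, p τ ⬝ᵥ p τ = p T ⬝ᵥ q T - p t₀ ⬝ᵥ q t₀ :=
    intervalIntegral.integral_eq_sub_of_hasDerivAt_of_le ht.le
      (fun τ hτ => (hpq τ hτ).continuousWithinAt)
      (fun τ hτ => (hpq τ (Ioo_subset_Icc_self hτ)).hasDerivAt (Icc_mem_nhds hτ.1 hτ.2))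
      (hpp.intervalIntegrable_of_Icc ht.le)
  have hpos : 0 < ∫ τ in t₀..T, p τ ⬝ᵥ p τ :=
    intervalIntegral.integral_pos ht hpp
      (fun τ _ => by simpa using dotProduct_star_self_nonneg (p τ))
      ⟨t₀, left_mem_Icc.mpr ht.le, by simpa [p, hP₀] using dotProduct_star_self_pos_iff.mpr hne⟩
  simp [hFTC, q, hv, hZ₀] at hpos

theorem humImage_eq_setOf_memLp (ht : t₀ < T) {w : ℝ → Matrix n n ℝ}
    (hw : ContinuousOn w (Icc t₀ T)) : humImage μ t₀ T w = {y | MemLp y 2 μ} := by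
  refine Subset.antisymm (fun y hy => hy.1) fun y hy => ?_
  obtain ⟨P, hP₀, hP⟩ := exists_forall_hasDerivWithinAt_Icc_mul_add ht.le
    ((continuous_id.matrix_transpose.neg).comp_continuousOn hw) (continuousOn_const (c := 0)) 1
  have hP' : ∀ t ∈ Icc t₀ T, HasDerivWithinAt P (-((w t)ᵀ * P t)) (Icc t₀ T) t := fun t ht =>
    (hP t ht).congr_deriv (by simp)
  obtain ⟨Z, hZ₀, hZ⟩ := exists_forall_hasDerivWithinAt_Icc_mul_add ht.le hw
    (fun t ht => (hP' t ht).continuousWithinAt) 0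
  have hZT := isUnit_of_hasDerivWithinAt_adjoint_forced ht hP' hP₀ hZ hZ₀
  set η := fun x => (Z T)⁻¹ *ᵥ y x
  refine ⟨hy, fun x => P T *ᵥ η x, (hy.const_mulVec _).const_mulVec _, fun t x => P t *ᵥ η x,
    fun t x => Z t *ᵥ η x, fun x t ht => ?_, fun x => rfl, fun x t ht => ?_, fun x => ?_, ?_⟩
  · simpa [neg_mulVec, mulVec_mulVec] using (hP' t ht).mulVec_const (η x)
  · simpa [add_mulVec, mulVec_mulVec] using (hZ t ht).mulVec_const (η x)
  · simp [hZ₀]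
  · refine ae_of_all _ fun x => ?_
    simp [η, mulVec_mulVec, mul_nonsing_inv _ ((isUnit_iff_isUnit_det _).mp hZT)]

theorem reachableSet_eq_setOf_memLp (ht : t₀ < T) {w : ℝ → Matrix n n ℝ}
    (hw : ContinuousOn w (Icc t₀ T)) : reachableSet μ t₀ T w = {y | MemLp y 2 μ} := by
  refine Subset.antisymm (fun y hy => hy.1) fun y hy => ?_
  obtain ⟨g, hgm, hyg⟩ : ∃ g, Measurable g ∧ y =ᵐ[μ] g :=
    ⟨_, hy.1.aemeasurable.measurable_mk, hy.1.aemeasurable.ae_eq_mk⟩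
  have hg : MemLp g 2 μ := hy.ae_eq hyg
  set W := fun t => w (projIcc t₀ T ht.le t)
  have hW : Continuous W :=
    hw.comp_continuous (continuous_subtype_val.comp continuous_projIcc) fun t => (projIcc _ _ _ t).2
  -- `B` is chosen so that `Φ(t, x) = θ t • g x` solves the equation
  set θ := fun t => (t - t₀) / (T - t₀)
  set B := fun t => (T - t₀)⁻¹ • (1 : Matrix n n ℝ) - θ t • W t
  have hB : Continuous B := continuous_const.sub (by fun_prop)
  refine ⟨hy, fun t x => B t *ᵥ g x, fun t _ => hg.const_mulVec _, ?_,
    fun s _ => (tendsto_integral_norm_mulVec_sub_sq (hB.tendsto s) hg).mono_left nhdsWithin_le_nhds,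
    fun t x => θ t • g x, fun x t htT => ?_, fun x => by simp [θ], ?_⟩
  · have hF : Continuous fun p : ℝ × (n → ℝ) => B p.1 *ᵥ p.2 :=
      (hB.comp continuous_fst).matrix_mulVec continuous_snd
    exact hF.measurable.comp (f := fun p : ℝ × α => (p.1, g p.2))
      (measurable_fst.prodMk (hgm.comp measurable_snd))
  · have hθ : HasDerivAt θ (1 / (T - t₀)) t := ((hasDerivAt_id t).sub_const t₀).div_const _
    refine (hθ.smul_const (g x)).hasDerivWithinAt.congr_deriv ?_
    simp [B, W, projIcc_of_mem ht.le htT, sub_mulVec, mulVec_smul, smul_mulVec]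
  · have hθT : θ T = 1 := div_self (sub_ne_zero.mpr ht.ne')
    exact EventuallyEq.trans (ae_of_all _ fun x => by simp [hθT]) hyg.symm

end MatrixNorm

/-- **Parameterized HUM for the characteristic flow** (Theorem 2). The reachable set
`𝓡_Φ` of terminal flow maps of `∂ₜΦ(t,x) = w(t)Φ(t,x) + b(t,x)`, `Φ(t₀,x) = 0`, over
admissible `L²` controls `b`, coincides with the image of the parameterized HUM map
`Γ_Φ : Λᵀ ↦ Φ(T,·)`, where `Λ` solves the adjoint equation `∂ₜΛ = -w(t)ᵀΛ`,
`Λ(T,·) = Λᵀ`, and `Φ` solves the flow equation with feedback control `b = Λ`. -/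
theorem flow_reachable_eq_image {d : ℕ} (t₀ T : ℝ) (ht : t₀ < T)
    (w : ℝ → Matrix (Fin d) (Fin d) ℝ) (hw : ContinuousOn w (Set.Icc t₀ T)) :
    {y : (Fin d → ℝ) → Fin d → ℝ | MemLp y 2 (volume : Measure (Fin d → ℝ)) ∧
      ∃ b : ℝ → (Fin d → ℝ) → Fin d → ℝ,
        (∀ t ∈ Set.Icc t₀ T, MemLp (b t) 2 (volume : Measure (Fin d → ℝ))) ∧
        Measurable (Function.uncurry b) ∧
        (∀ s ∈ Set.Icc t₀ T,
          Filter.Tendsto (fun t => ∫ x, ‖b t x - b s x‖ ^ 2)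
            (nhdsWithin s (Set.Icc t₀ T)) (nhds 0)) ∧
        ∃ Φ : ℝ → (Fin d → ℝ) → Fin d → ℝ,
          (∀ x, ∀ t ∈ Set.Icc t₀ T,
            HasDerivWithinAt (fun s => Φ s x) (w t *ᵥ Φ t x + b t x) (Set.Icc t₀ T) t) ∧
          (∀ x, Φ t₀ x = 0) ∧ Φ T =ᵐ[(volume : Measure (Fin d → ℝ))] y} =
    {y : (Fin d → ℝ) → Fin d → ℝ | MemLp y 2 (volume : Measure (Fin d → ℝ)) ∧
      ∃ ΛT : (Fin d → ℝ) → Fin d → ℝ, MemLp ΛT 2 (volume : Measure (Fin d → ℝ)) ∧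
        ∃ Λ Φ : ℝ → (Fin d → ℝ) → Fin d → ℝ,
          (∀ x, ∀ t ∈ Set.Icc t₀ T,
            HasDerivWithinAt (fun s => Λ s x) (-((w t)ᵀ *ᵥ Λ t x)) (Set.Icc t₀ T) t) ∧
          (∀ x, Λ T x = ΛT x) ∧
          (∀ x, ∀ t ∈ Set.Icc t₀ T,
            HasDerivWithinAt (fun s => Φ s x) (w t *ᵥ Φ t x + Λ t x) (Set.Icc t₀ T) t) ∧
          (∀ x, Φ t₀ x = 0) ∧ Φ T =ᵐ[(volume : Measure (Fin d → ℝ))] y} := by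
  change reachableSet volume t₀ T w = humImage volume t₀ T w
  rw [reachableSet_eq_setOf_memLp ht hw, humImage_eq_setOf_memLp ht hw]
end
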